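/- arXiv:1805.12587 — 2 statements merged into one kernel-verified Lean document; each statement's English description precedes it below -/
import Mathlib

section
/- Let α ∈ (1,2] and let λ, μ, ν, u, v be complex numbers with λ ≠ 0. Then for every integer ℓ ≥ 1, the diagonal starting coefficients of the doubly indexed sequence satisfy a_{2ℓ,2ℓ} = (μ/(2λ)) · (2λv/Γ(α−1))^{ℓ} · Π_{j=1}^{ℓ} Γ((2j−1)(α−1)) / Γ((2j−1)(α−1)+α), and a_{2ℓ+1,2ℓ+1} = (u/Γ(α)) · (2λv/Γ(α−1))^{ℓ} · Π_{j=1}^{ℓ} Γ(2j(α−1)) / Γ(2j(α−1)+α). -/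
open Finset

/-- Valuation: `k(0) = k(1) = k(2) = 1` and `k(ℓ) = ℓ` for `ℓ ≥ 3` (case `α ∈ (1,2]`). -/
def kval (l : ℕ) : ℕ := if l ≤ 2 then 1 else l

/-- The double discrete convolution
`a*²_{m,ℓ} = ∑_{k₁+k₂=m, ℓ₁+ℓ₂=ℓ, kᵢ≥1, ℓᵢ≥0} a_{k₁,ℓ₁} a_{k₂,ℓ₂}`. -/
noncomputable def dconv (a : ℕ → ℕ → ℂ) (m l : ℕ) : ℂ :=
  ∑ k₁ ∈ Finset.Ico 1 m, ∑ l₁ ∈ Finset.range (l + 1), a k₁ l₁ * a (m - k₁) (l - l₁)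

/-- The doubly indexed coefficients `a_{k,ℓ}` of the non-homogeneous fractional
Riccati equation, case `α ∈ (1,2]` with initial conditions `u`, `v`. -/
def IsDoubleRiccatiSeq2 (α : ℝ) (lam mu nu u v : ℂ) (a : ℕ → ℕ → ℂ) : Prop :=
  a 1 0 = nu / (Real.Gamma (α + 1) : ℂ) ∧
  a 1 1 = u / (Real.Gamma α : ℂ) ∧
  a 1 2 = v / (Real.Gamma (α - 1) : ℂ) ∧
  (∀ l : ℕ, 3 ≤ l → a 1 l = 0) ∧
  (∀ k l : ℕ, k < kval l → a k l = 0) ∧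
  (∀ l k : ℕ, max (kval l) 2 ≤ k →
    a k l = (mu * a (k - 1) l + lam * dconv a (k - 1) l) *
      ((Real.Gamma (α * ((k:ℝ) - 1) - (l:ℝ) + 1) / Real.Gamma (α * (k:ℝ) - (l:ℝ) + 1) : ℝ) : ℂ))

lemma dconv_diag (α : ℝ) (lam mu nu u v : ℂ) (a : ℕ → ℕ → ℂ)
    (ha : IsDoubleRiccatiSeq2 α lam mu nu u v a) (n : ℕ) (hn : 3 ≤ n) :
    dconv a n (n + 1) = 2 * a 1 2 * a (n - 1) (n - 1) := by
  obtain ⟨h1, h2, h3, h4, h5, h6⟩ := ha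
  unfold dconv
  rw [← Finset.sum_product']
  have hsub : ({(1, 2), (n - 1, n - 1)} : Finset (ℕ × ℕ)) ⊆
      Finset.Ico 1 n ×ˢ Finset.range (n + 1 + 1) := by
    intro p hp
    simp only [Finset.mem_insert, Finset.mem_singleton] at hp
    rcases hp with h | h <;> subst h <;>
      simp only [Finset.mem_product, Finset.mem_Ico, Finset.mem_range] <;> omega
  rw [← Finset.sum_subset hsub]
  · have hne : ((1, 2) : ℕ × ℕ) ≠ (n - 1, n - 1) := by
      intro h; rw [Prod.ext_iff] at h; simp at h; omega
    rw [Finset.sum_pair hne]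
    have e1 : n + 1 - 2 = n - 1 := by omega
    have e2 : n - (n - 1) = 1 := by omega
    have e3 : n + 1 - (n - 1) = 2 := by omega
    rw [e1, e2, e3]; ring
  · rintro ⟨k₁, l₁⟩ hp hpne
    simp only [Finset.mem_product, Finset.mem_Ico, Finset.mem_range] at hp
    simp only [Finset.mem_insert, Finset.mem_singleton, Prod.mk.injEq] at hpne
    have hz : k₁ < kval l₁ ∨ n - k₁ < kval (n + 1 - l₁) := by
      unfold kval; split_ifs <;> omega
    rcases hz with h | h
    · rw [h5 _ _ h, zero_mul]
    · rw [h5 _ _ h, mul_zero]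

lemma diag_rec (α : ℝ) (lam mu nu u v : ℂ) (a : ℕ → ℕ → ℂ)
    (ha : IsDoubleRiccatiSeq2 α lam mu nu u v a) (k : ℕ) (hk : 4 ≤ k) :
    a k k = 2 * lam * a 1 2 * a (k - 2) (k - 2) *
      ((Real.Gamma (α * ((k:ℝ) - 1) - (k:ℝ) + 1) /
        Real.Gamma (α * (k:ℝ) - (k:ℝ) + 1) : ℝ) : ℂ) := by
  have h5 := ha.2.2.2.2.1
  have h6 := ha.2.2.2.2.2
  have hkv : kval k = k := by
    unfold kval; rw [if_neg (by omega)]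
  have hrec := h6 k k (by rw [hkv]; omega)
  have hz : a (k - 1) k = 0 := h5 _ _ (by rw [hkv]; omega)
  have hd : dconv a (k - 1) k = 2 * a 1 2 * a (k - 2) (k - 2) := by
    have hn : 3 ≤ k - 1 := by omega
    have hdd := dconv_diag α lam mu nu u v a ha (k - 1) hn
    have e : k - 1 + 1 = k := by omega
    have e2 : k - 1 - 1 = k - 2 := by omega
    rw [e, e2] at hdd
    exact hdd
  rw [hrec, hz, hd]; ring

theorem stmt_18 (α : ℝ) (hα : 1 < α) (hα2 : α ≤ 2)
    (lam mu nu u v : ℂ) (hlam : lam ≠ 0)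
    (a : ℕ → ℕ → ℂ) (ha : IsDoubleRiccatiSeq2 α lam mu nu u v a) :
    ∀ l : ℕ, 1 ≤ l →
      a (2 * l) (2 * l) = (mu / (2 * lam)) * (2 * lam * v / (Real.Gamma (α - 1) : ℂ)) ^ l *
        ∏ j ∈ Finset.Icc 1 l, ((Real.Gamma ((2*(j:ℝ) - 1) * (α - 1)) /
          Real.Gamma ((2*(j:ℝ) - 1) * (α - 1) + α) : ℝ) : ℂ) ∧
      a (2 * l + 1) (2 * l + 1) = (u / (Real.Gamma α : ℂ)) *
        (2 * lam * v / (Real.Gamma (α - 1) : ℂ)) ^ l *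
        ∏ j ∈ Finset.Icc 1 l, ((Real.Gamma (2*(j:ℝ) * (α - 1)) /
          Real.Gamma (2*(j:ℝ) * (α - 1) + α) : ℝ) : ℂ) := by
  obtain ⟨h1, h2, h3, h4, h5, h6⟩ := ha
  have hG : ((Real.Gamma (α - 1) : ℝ) : ℂ) ≠ 0 := by
    exact_mod_cast (Real.Gamma_pos_of_pos (by linarith)).ne'
  have h2lam : (2 : ℂ) * lam ≠ 0 := by
    simp [hlam]
  refine Nat.le_induction ?_ ?_
  · -- base case l = 1
    constructor
    · -- a 2 2
      have h22 := h6 2 2 (by decide)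
      have hd0 : dconv a 1 2 = 0 := by simp [dconv]
      rw [hd0] at h22
      have ea : α * ((2:ℕ):ℝ) - (2:ℝ) + 1 = (2*((1:ℕ):ℝ) - 1) * (α - 1) + α := by
        push_cast; ring
      have eb : α * (((2:ℕ):ℝ) - 1) - (2:ℝ) + 1 = (2*((1:ℕ):ℝ) - 1) * (α - 1) := by
        push_cast; ring
      rw [show (2:ℕ) * 1 = 2 by rfl] at *
      rw [h22]
      norm_num [h3, Finset.Icc_self]
      rw [show α - 2 + 1 = α - 1 by ring]
      rw [show α * 2 - 2 + 1 = α - 1 + α by ring]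
      have key : mu / (2*lam) * (2*lam*v/((Real.Gamma (α-1) : ℝ) : ℂ))
          = mu * (v / ((Real.Gamma (α-1) : ℝ) : ℂ)) := by
        rw [div_mul_div_comm, show mu*(2*lam*v) = (2*lam)*(mu*v) by ring,
          mul_div_mul_left _ _ h2lam, mul_div_assoc]
      rw [key]
    · -- a 3 3
      have h33 := h6 3 3 (by decide)
      have hz23 : a 2 3 = 0 := h5 2 3 (by decide)
      have hd : dconv a 2 3 = 2 * (u / (Real.Gamma α : ℂ)) * (v / (Real.Gamma (α-1) : ℂ)) := by
        have h13 : a 1 3 = 0 := h4 3 le_rfl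
        simp [dconv, Finset.sum_range_succ, show Finset.Ico 1 2 = {1} from rfl,
          h13, h2, h3]
        ring
      rw [show (2:ℕ) * 1 = 2 by rfl] at *
      norm_num at h33 ⊢
      rw [h33, hz23, hd]
      norm_num [Finset.Icc_self]
      rw [show α * 2 - 3 + 1 = 2 * (α - 1) by ring]
      rw [show α * 3 - 3 + 1 = 2 * (α - 1) + α by ring]
      ring
  · -- inductive step
    rintro l hl ⟨ihE, ihO⟩
    constructor
    · -- even
      have hk : (4:ℕ) ≤ 2 * (l + 1) := by omega
      have hr := diag_rec α lam mu nu u v a ⟨h1, h2, h3, h4, h5, h6⟩ (2 * (l + 1)) hk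
      have e2 : 2 * (l + 1) - 2 = 2 * l := by omega
      rw [e2] at hr
      rw [hr, ihE, h3, pow_succ,
        Finset.prod_Icc_succ_top (by omega : 1 ≤ l + 1)]
      have ea : α * (((2 * (l+1) : ℕ):ℝ) - 1) - ((2 * (l+1) : ℕ):ℝ) + 1
          = (2*(((l+1):ℕ):ℝ) - 1) * (α - 1) := by push_cast; ring
      have eb : α * ((2 * (l+1) : ℕ):ℝ) - ((2 * (l+1) : ℕ):ℝ) + 1
          = (2*(((l+1):ℕ):ℝ) - 1) * (α - 1) + α := by push_cast; ring
      rw [ea, eb]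
      ring
    · -- odd
      have hk : (4:ℕ) ≤ 2 * (l + 1) + 1 := by omega
      have hr := diag_rec α lam mu nu u v a ⟨h1, h2, h3, h4, h5, h6⟩ (2 * (l + 1) + 1) hk
      have e2 : 2 * (l + 1) + 1 - 2 = 2 * l + 1 := by omega
      rw [e2] at hr
      rw [hr, ihO, h3, pow_succ,
        Finset.prod_Icc_succ_top (by omega : 1 ≤ l + 1)]
      have ea : α * (((2 * (l+1) + 1 : ℕ):ℝ) - 1) - ((2 * (l+1) + 1 : ℕ):ℝ) + 1
          = 2*(((l+1):ℕ):ℝ) * (α - 1) := by push_cast; ring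
      have eb : α * ((2 * (l+1) + 1 : ℕ):ℝ) - ((2 * (l+1) + 1 : ℕ):ℝ) + 1
          = 2*(((l+1):ℕ):ℝ) * (α - 1) + α := by push_cast; ring
      rw [ea, eb]
      ring
end

section
/- Let α ∈ (1,2] and let λ, μ, ν, u, v be complex numbers. Then there exist constants C > 0, θ > 0 and ρ > 0 such that the doubly indexed coefficients satisfy |a_{k,ℓ}| ≤ C·θ^{ℓ}·ρ^{k}·(k − k(ℓ) + 1)^{α/2 − 1}·(max(ℓ,1))^{α/2 − 1} for every ℓ ≥ 0 and every k ≥ k(ℓ). Consequently there exists R > 0 such that for every t ∈ (0,R) the doubly indexed series Σ_{ℓ≥0} Σ_{k≥k(ℓ)} |a_{k,ℓ}| · t^{αk−ℓ} converges. -/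
open Finset

/-!
The Gamma quotient in the recursion is at most `3 / (α - 1)` by convexity of `Γ`, so the
coefficients are dominated by a quadratic recursion. A plain geometric bound `C r ^ k` does not
survive the convolution, which has about `k ℓ` terms, but the weighted bound
`‖a k l‖ ≤ C r ^ k / (k² (l + 1)²)` does, because `∑_{i + j = n} 1 / (i² j²) ≤ 8 / n²`.
Hence `‖a k l‖ ≤ C r ^ k`, which gives both claims: the factors `n ^ (α / 2 - 1) ≥ 1 / n` are
absorbed by `2 ^ k` and `2 ^ l`, and since `a k l = 0` unless `l ≤ k + 2`, the series is dominated
by a double geometric series once `r t ^ (α - 1) ≤ 1 / 4`.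
-/

theorem Real.Gamma_div_Gamma_add_le {α x : ℝ} (hα : 1 < α) (hα2 : α ≤ 2) (hx : α - 1 ≤ x) :
    Real.Gamma x / Real.Gamma (x + α) ≤ 3 / (α - 1) := by
  have hx0 : 0 < x := by linarith
  have hΓx := Real.Gamma_pos_of_pos hx0
  have hΓxα := Real.Gamma_pos_of_pos (by linarith : 0 < x + α)
  -- `x + 2` is a convex combination of `x + α` and `x + α + 1`
  have hconv := Real.convexOn_Gamma.2 (Set.mem_Ioi.2 (by linarith : 0 < x + α))
    (Set.mem_Ioi.2 (by linarith : 0 < x + α + 1)) (by linarith : 0 ≤ α - 1)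
    (by linarith : 0 ≤ 2 - α) (by ring)
  rw [smul_eq_mul, smul_eq_mul, smul_eq_mul, smul_eq_mul,
    show (α - 1) * (x + α) + (2 - α) * (x + α + 1) = x + 1 + 1 by ring,
    Real.Gamma_add_one (by linarith), Real.Gamma_add_one (by linarith),
    Real.Gamma_add_one (by linarith : x + α ≠ 0)] at hconv
  have hcoef : (α - 1) + (2 - α) * (x + α) ≤ 3 * (x + 1) := by nlinarith
  have hxΓ : x * Real.Gamma x ≤ 3 * Real.Gamma (x + α) := by
    refine le_of_mul_le_mul_left ?_ (by linarith : 0 < x + 1)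
    nlinarith
  rw [div_le_div_iff₀ hΓxα (by linarith)]
  nlinarith

theorem sum_Ico_inv_sq_mul_inv_sq_le (m : ℕ) :
    ∑ i ∈ Ico 1 m, ((i : ℝ) ^ 2 * ((m - i : ℕ) : ℝ) ^ 2)⁻¹ ≤ 8 / (m : ℝ) ^ 2 := by
  have hsum : ∑ i ∈ Ico 1 m, ((i : ℝ) ^ 2)⁻¹ ≤ 2 := by
    have h := sum_Ioo_inv_sq_le (α := ℝ) 0 m
    rw [← Ico_add_one_left_eq_Ioo, zero_add] at h
    norm_num at h
    exact h
  have hreflect : ∑ i ∈ Ico 1 m, (((m - i : ℕ) : ℝ) ^ 2)⁻¹ = ∑ i ∈ Ico 1 m, ((i : ℝ) ^ 2)⁻¹ := by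
    rw [sum_Ico_reflect (fun j => ((j : ℝ) ^ 2)⁻¹) 1 (by omega : m ≤ m + 1),
      Nat.add_sub_cancel_left, Nat.add_sub_cancel]
  -- `1 / (i (m - i)) = (1 / i + 1 / (m - i)) / m` and `(p + q)² ≤ 2 (p² + q²)`
  have hterm : ∀ i ∈ Ico 1 m, ((i : ℝ) ^ 2 * ((m - i : ℕ) : ℝ) ^ 2)⁻¹ ≤
      2 / (m : ℝ) ^ 2 * (((i : ℝ) ^ 2)⁻¹ + (((m - i : ℕ) : ℝ) ^ 2)⁻¹) := by
    intro i hi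
    rw [mem_Ico] at hi
    have hA : (0 : ℝ) < i := by exact_mod_cast hi.1
    have hB : (0 : ℝ) < ((m - i : ℕ) : ℝ) := by exact_mod_cast Nat.sub_pos_of_lt hi.2
    have hm : (m : ℝ) = i + ((m - i : ℕ) : ℝ) := by rw [Nat.cast_sub hi.2.le]; ring
    rw [hm]
    field_simp
    nlinarith [sq_nonneg ((i : ℝ) - ((m - i : ℕ) : ℝ)), mul_pos hA hB]
  calc _ ≤ ∑ i ∈ Ico 1 m, 2 / (m : ℝ) ^ 2 * (((i : ℝ) ^ 2)⁻¹ + (((m - i : ℕ) : ℝ) ^ 2)⁻¹) :=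
        sum_le_sum hterm
    _ = 2 / (m : ℝ) ^ 2 * (2 * ∑ i ∈ Ico 1 m, ((i : ℝ) ^ 2)⁻¹) := by
        rw [← mul_sum, sum_add_distrib, hreflect, two_mul]
    _ ≤ 2 / (m : ℝ) ^ 2 * (2 * 2) := by gcongr
    _ = 8 / (m : ℝ) ^ 2 := by ring

theorem sum_range_inv_sq_mul_inv_sq_le (n : ℕ) :
    ∑ j ∈ range (n + 1), (((j : ℝ) + 1) ^ 2 * (((n - j : ℕ) : ℝ) + 1) ^ 2)⁻¹ ≤
      8 / ((n : ℝ) + 1) ^ 2 := by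
  have h := sum_Ico_inv_sq_mul_inv_sq_le (n + 2)
  rw [sum_Ico_eq_sum_range, show n + 2 - 1 = n + 1 by omega] at h
  calc _ = ∑ j ∈ range (n + 1),
        (((1 + j : ℕ) : ℝ) ^ 2 * ((n + 2 - (1 + j) : ℕ) : ℝ) ^ 2)⁻¹ := by
        refine sum_congr rfl fun j hj => ?_
        rw [mem_range] at hj
        rw [show n + 2 - (1 + j) = (n - j) + 1 by omega]
        push_cast; ring
    _ ≤ 8 / ((n + 2 : ℕ) : ℝ) ^ 2 := h
    _ ≤ 8 / ((n : ℝ) + 1) ^ 2 := by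
        gcongr
        push_cast; linarith

theorem norm_dconv_le {a : ℕ → ℕ → ℂ} {B r : ℝ} {m : ℕ} (hr : 0 ≤ r)
    (h : ∀ k, 1 ≤ k → k < m → ∀ j, ‖a k j‖ ≤ B * r ^ k / ((k : ℝ) ^ 2 * ((j : ℝ) + 1) ^ 2))
    (l : ℕ) : ‖dconv a m l‖ ≤ 64 * B ^ 2 * r ^ m / ((m : ℝ) ^ 2 * ((l : ℝ) + 1) ^ 2) := by
  set f : ℕ → ℝ := fun i => ((i : ℝ) ^ 2 * ((m - i : ℕ) : ℝ) ^ 2)⁻¹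
  set g : ℕ → ℝ := fun j => (((j : ℝ) + 1) ^ 2 * (((l - j : ℕ) : ℝ) + 1) ^ 2)⁻¹
  have hterm : ∀ i ∈ Ico 1 m, ∀ j ∈ range (l + 1),
      ‖a i j * a (m - i) (l - j)‖ ≤ B ^ 2 * r ^ m * (f i * g j) := by
    intro i hi j _
    rw [mem_Ico] at hi
    have h₁ := h i hi.1 hi.2 j
    have h₂ := h (m - i) (by omega) (by omega) (l - j)
    calc ‖a i j * a (m - i) (l - j)‖ = ‖a i j‖ * ‖a (m - i) (l - j)‖ := norm_mul _ _
      _ ≤ B * r ^ i / ((i : ℝ) ^ 2 * ((j : ℝ) + 1) ^ 2) *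
          (B * r ^ (m - i) / (((m - i : ℕ) : ℝ) ^ 2 * (((l - j : ℕ) : ℝ) + 1) ^ 2)) :=
        mul_le_mul h₁ h₂ (norm_nonneg _) ((norm_nonneg _).trans h₁)
      _ = B ^ 2 * (r ^ i * r ^ (m - i)) * (f i * g j) := by
        simp only [f, g]; field_simp
      _ = B ^ 2 * r ^ m * (f i * g j) := by
        rw [← pow_add, Nat.add_sub_cancel' hi.2.le]
  calc ‖dconv a m l‖ ≤ ∑ i ∈ Ico 1 m, ∑ j ∈ range (l + 1), B ^ 2 * r ^ m * (f i * g j) := by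
        refine (norm_sum_le _ _).trans (sum_le_sum fun i hi => ?_)
        exact (norm_sum_le _ _).trans (sum_le_sum fun j hj => hterm i hi j hj)
    _ = B ^ 2 * r ^ m * ((∑ i ∈ Ico 1 m, f i) * ∑ j ∈ range (l + 1), g j) := by
        rw [sum_mul_sum, mul_sum]
        exact sum_congr rfl fun i _ => by rw [mul_sum]
    _ ≤ B ^ 2 * r ^ m * (8 / (m : ℝ) ^ 2 * (8 / ((l : ℝ) + 1) ^ 2)) := by
        gcongr
        · exact sum_Ico_inv_sq_mul_inv_sq_le m
        · exact sum_range_inv_sq_mul_inv_sq_le l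
    _ = 64 * B ^ 2 * r ^ m / ((m : ℝ) ^ 2 * ((l : ℝ) + 1) ^ 2) := by
        rw [div_mul_div_comm, ← mul_div_assoc]; ring

theorem norm_le_of_norm_succ_le {a : ℕ → ℕ → ℂ} {M p q C r : ℝ}
    (hM : 0 ≤ M) (hp : 0 ≤ p) (hq : 0 ≤ q) (hC : 0 ≤ C) (hr : 4 * M * (p + 64 * q * C) ≤ r)
    (h₁ : ∀ l, ‖a 1 l‖ ≤ C * r / ((l : ℝ) + 1) ^ 2)
    (hstep : ∀ m, 1 ≤ m → ∀ l, ‖a (m + 1) l‖ ≤ M * (p * ‖a m l‖ + q * ‖dconv a m l‖)) :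
    ∀ k, 1 ≤ k → ∀ l, ‖a k l‖ ≤ C * r ^ k / ((k : ℝ) ^ 2 * ((l : ℝ) + 1) ^ 2) := by
  have hr0 : 0 ≤ r := le_trans (by positivity) hr
  intro k
  induction k using Nat.strong_induction_on with
  | _ k ih =>
  intro hk l
  obtain rfl | ⟨m, hm, rfl⟩ : k = 1 ∨ ∃ m, 1 ≤ m ∧ k = m + 1 := by
    rcases Nat.lt_or_ge k 2 with h | h
    · left; omega
    · right; exact ⟨k - 1, by omega, by omega⟩
  · simpa using h₁ l
  set X := C * r ^ m / ((m : ℝ) ^ 2 * ((l : ℝ) + 1) ^ 2)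
  have hprev : ‖a m l‖ ≤ X := ih m (by omega) hm l
  have hconv : ‖dconv a m l‖ ≤ 64 * C * X := by
    calc ‖dconv a m l‖ ≤ 64 * C ^ 2 * r ^ m / ((m : ℝ) ^ 2 * ((l : ℝ) + 1) ^ 2) :=
          norm_dconv_le hr0 (fun k hk hkm j => ih k (by omega) hk j) l
      _ = 64 * C * X := by simp only [X]; ring
  have hm_sq : ((m : ℝ) + 1) ^ 2 ≤ 4 * (m : ℝ) ^ 2 := by
    have : (1 : ℝ) ≤ m := by exact_mod_cast hm
    nlinarith
  calc ‖a (m + 1) l‖ ≤ M * (p * X + q * (64 * C * X)) := by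
        refine (hstep m hm l).trans ?_
        gcongr
    _ = M * (p + 64 * q * C) * X := by ring
    _ ≤ r / 4 * X := by gcongr; linarith
    _ = C * r ^ (m + 1) / (4 * (m : ℝ) ^ 2 * ((l : ℝ) + 1) ^ 2) := by
        have : (m : ℝ) ≠ 0 := by positivity
        simp only [X]; field_simp; ring
    _ ≤ C * r ^ (m + 1) / (((m + 1 : ℕ) : ℝ) ^ 2 * ((l : ℝ) + 1) ^ 2) := by
        push_cast
        exact div_le_div_of_nonneg_left (by positivity) (by positivity)
          (mul_le_mul_of_nonneg_right hm_sq (by positivity))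

theorem summable_norm_mul_rpow {a : ℕ → ℕ → ℂ} {C r α t : ℝ} (hr : 0 ≤ r)
    (hbound : ∀ k l, ‖a k l‖ ≤ C * r ^ k) (hsupp : ∀ k l, k + 2 < l → a k l = 0)
    (ht : 0 < t) (ht1 : t ≤ 1) (hrt : r * t ^ (α - 1) ≤ 1 / 4) :
    Summable fun p : ℕ × ℕ => ‖a p.1 p.2‖ * t ^ (α * (p.1 : ℝ) - (p.2 : ℝ)) := by
  have hC : 0 ≤ C := by simpa using (norm_nonneg _).trans (hbound 0 0)
  have hgeom : Summable fun p : ℕ × ℕ => (1 / 2 : ℝ) ^ p.1 * (1 / 2 : ℝ) ^ p.2 :=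
    summable_geometric_two.mul_of_nonneg summable_geometric_two
      (fun _ => by positivity) (fun _ => by positivity)
  refine .of_nonneg_of_le (fun _ => by positivity) (fun ⟨k, l⟩ => ?_)
    (hgeom.mul_left (4 * C * t ^ (-2 : ℝ)))
  rcases lt_or_ge (k + 2) l with hkl | hkl
  · rw [hsupp k l hkl, norm_zero, zero_mul]
    positivity
  have hexp : t ^ (α * (k : ℝ) - (l : ℝ)) ≤ (t ^ (α - 1)) ^ k * t ^ (-2 : ℝ) := by
    rw [← Real.rpow_natCast, ← Real.rpow_mul ht.le, ← Real.rpow_add ht]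
    refine Real.rpow_le_rpow_of_exponent_ge ht ht1 ?_
    have : (l : ℝ) ≤ k + 2 := by exact_mod_cast hkl
    linarith
  have hhalf : (1 / 2 : ℝ) ^ k ≤ 4 * (1 / 2 : ℝ) ^ l := by
    calc (1 / 2 : ℝ) ^ k = 4 * (1 / 2 : ℝ) ^ (k + 2) := by ring
      _ ≤ 4 * (1 / 2 : ℝ) ^ l := by
        gcongr 4 * ?_
        exact pow_le_pow_of_le_one (by norm_num) (by norm_num) hkl
  calc ‖a k l‖ * t ^ (α * (k : ℝ) - (l : ℝ)) ≤ C * r ^ k * ((t ^ (α - 1)) ^ k * t ^ (-2 : ℝ)) :=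
        mul_le_mul (hbound k l) hexp (by positivity) (by positivity)
    _ = C * t ^ (-2 : ℝ) * (r * t ^ (α - 1)) ^ k := by ring
    _ ≤ C * t ^ (-2 : ℝ) * (1 / 4) ^ k := by gcongr
    _ = C * t ^ (-2 : ℝ) * ((1 / 2) ^ k * (1 / 2) ^ k) := by rw [← mul_pow]; norm_num
    _ ≤ C * t ^ (-2 : ℝ) * ((1 / 2) ^ k * (4 * (1 / 2) ^ l)) := by gcongr
    _ = 4 * C * t ^ (-2 : ℝ) * ((1 / 2) ^ k * (1 / 2) ^ l) := by ring

theorem one_le_two_pow_mul_rpow {n j : ℕ} {s : ℝ} (hn : 1 ≤ n) (hnj : n ≤ 2 ^ j) (hs : -1 ≤ s) :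
    1 ≤ (2 : ℝ) ^ j * (n : ℝ) ^ s := by
  have hn' : (1 : ℝ) ≤ n := by exact_mod_cast hn
  calc (1 : ℝ) ≤ (2 : ℝ) ^ j * (n : ℝ) ^ (-1 : ℝ) := by
        rw [Real.rpow_neg_one, ← div_eq_mul_inv, one_le_div (by positivity)]
        exact_mod_cast hnj
    _ ≤ (2 : ℝ) ^ j * (n : ℝ) ^ s := by gcongr

theorem exists_summable_norm_mul_rpow {a : ℕ → ℕ → ℂ} {C r α : ℝ} (hα : 1 < α) (hr : 0 < r)
    (hbound : ∀ k l, ‖a k l‖ ≤ C * r ^ k) (hsupp : ∀ k l, k + 2 < l → a k l = 0) :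
    ∃ R : ℝ, 0 < R ∧ ∀ t : ℝ, 0 < t → t < R →
      Summable fun p : ℕ × ℕ => ‖a p.1 p.2‖ * t ^ (α * (p.1 : ℝ) - (p.2 : ℝ)) := by
  have hβ : 0 < α - 1 := by linarith
  refine ⟨min 1 ((4 * r)⁻¹ ^ (α - 1)⁻¹), by positivity, fun t ht htR => ?_⟩
  refine summable_norm_mul_rpow hr.le hbound hsupp ht (htR.le.trans (min_le_left _ _)) ?_
  have hpow : t ^ (α - 1) ≤ (4 * r)⁻¹ := by
    calc t ^ (α - 1) ≤ ((4 * r)⁻¹ ^ (α - 1)⁻¹) ^ (α - 1) :=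
          Real.rpow_le_rpow ht.le (htR.le.trans (min_le_right _ _)) hβ.le
      _ = (4 * r)⁻¹ := Real.rpow_inv_rpow (by positivity) hβ.ne'
  calc r * t ^ (α - 1) ≤ r * (4 * r)⁻¹ := by gcongr
    _ = 1 / 4 := by field_simp

theorem one_le_kval (l : ℕ) : 1 ≤ kval l := by
  unfold kval; split <;> omega

theorem le_kval_add_two (l : ℕ) : l ≤ kval l + 2 := by
  unfold kval; split <;> omega

theorem le_max_kval_two (l : ℕ) : l ≤ max (kval l) 2 := by
  unfold kval; split <;> omega

namespace IsDoubleRiccatiSeq2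

variable {α : ℝ} {lam mu nu u v : ℂ} {a : ℕ → ℕ → ℂ}

theorem norm_one_le (ha : IsDoubleRiccatiSeq2 α lam mu nu u v a) (l : ℕ) :
    ‖a 1 l‖ ≤ 9 * (‖a 1 0‖ + ‖a 1 1‖ + ‖a 1 2‖) / ((l : ℝ) + 1) ^ 2 := by
  rcases lt_or_ge l 3 with hl | hl
  · have := norm_nonneg (a 1 0); have := norm_nonneg (a 1 1); have := norm_nonneg (a 1 2)
    interval_cases l <;> norm_num <;> linarith
  · rw [ha.2.2.2.1 l hl, norm_zero]
    positivity

theorem norm_succ_le (ha : IsDoubleRiccatiSeq2 α lam mu nu u v a) (hα : 1 < α) (hα2 : α ≤ 2)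
    {m : ℕ} (hm : 1 ≤ m) (l : ℕ) :
    ‖a (m + 1) l‖ ≤ 3 / (α - 1) * (‖mu‖ * ‖a m l‖ + ‖lam‖ * ‖dconv a m l‖) := by
  rcases lt_or_ge (m + 1) (kval l) with hlt | hge
  · rw [ha.2.2.2.2.1 _ _ hlt, norm_zero]
    have : 0 < α - 1 := by linarith
    positivity
  have hk : max (kval l) 2 ≤ m + 1 := max_le hge (by omega)
  have hx : α - 1 ≤ α * m - l + 1 := by
    have hl : (l : ℝ) ≤ m + 1 := by exact_mod_cast (le_max_kval_two l).trans hk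
    have : (1 : ℝ) ≤ m := by exact_mod_cast hm
    nlinarith
  have hΓ := Real.Gamma_div_Gamma_add_le hα hα2 hx
  have hΓ₀ : 0 ≤ Real.Gamma (α * m - l + 1) / Real.Gamma (α * m - l + 1 + α) :=
    div_nonneg (Real.Gamma_pos_of_pos (by linarith)).le (Real.Gamma_pos_of_pos (by linarith)).le
  rw [ha.2.2.2.2.2 l (m + 1) hk, Nat.add_sub_cancel, norm_mul, Complex.norm_real,
    Real.norm_eq_abs]
  push_cast
  rw [show α * ((m : ℝ) + 1 - 1) - l + 1 = α * m - l + 1 by ring,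
    show α * ((m : ℝ) + 1) - l + 1 = α * m - l + 1 + α by ring, abs_of_nonneg hΓ₀, mul_comm]
  gcongr
  refine (norm_add_le _ _).trans ?_
  rw [norm_mul, norm_mul]

theorem exists_norm_le_geometric (ha : IsDoubleRiccatiSeq2 α lam mu nu u v a) (hα : 1 < α)
    (hα2 : α ≤ 2) : ∃ C r : ℝ, 0 < C ∧ 0 < r ∧ ∀ k l, ‖a k l‖ ≤ C * r ^ k := by
  set C := 9 * (‖a 1 0‖ + ‖a 1 1‖ + ‖a 1 2‖) + 1
  set r := max 1 (4 * (3 / (α - 1)) * (‖mu‖ + 64 * ‖lam‖ * C))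
  have hC : 0 < C := by positivity
  have hr : 1 ≤ r := le_max_left _ _
  have h₁ (l : ℕ) : ‖a 1 l‖ ≤ C * r / ((l : ℝ) + 1) ^ 2 := by
    refine (ha.norm_one_le l).trans (div_le_div_of_nonneg_right ?_ (by positivity))
    exact (by linarith : _ ≤ C).trans (le_mul_of_one_le_right hC.le hr)
  have hweighted := norm_le_of_norm_succ_le (div_nonneg (by norm_num) (by linarith))
    (norm_nonneg mu) (norm_nonneg lam) hC.le (le_max_right _ _) h₁
    (fun m hm l => ha.norm_succ_le hα hα2 hm l)
  refine ⟨C, r, hC, by linarith, fun k l => ?_⟩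
  rcases Nat.eq_zero_or_pos k with rfl | hk
  · rw [ha.2.2.2.2.1 0 l (one_le_kval l), norm_zero]
    positivity
  have hden : 1 ≤ (k : ℝ) ^ 2 * ((l : ℝ) + 1) ^ 2 := by
    have : (1 : ℝ) ≤ k := by exact_mod_cast hk
    exact one_le_mul_of_one_le_of_one_le (one_le_pow₀ this) (one_le_pow₀ (by linarith))
  exact (hweighted k hk l).trans (div_le_self (by positivity) hden)

end IsDoubleRiccatiSeq2

theorem stmt_19 (α : ℝ) (hα : 1 < α) (hα2 : α ≤ 2)
    (lam mu nu u v : ℂ)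
    (a : ℕ → ℕ → ℂ) (ha : IsDoubleRiccatiSeq2 α lam mu nu u v a) :
    ∃ C θ ρ : ℝ, 0 < C ∧ 0 < θ ∧ 0 < ρ ∧
      (∀ l k : ℕ, kval l ≤ k →
        ‖a k l‖ ≤ C * θ ^ l * ρ ^ k * ((k - kval l + 1 : ℕ) : ℝ) ^ (α/2 - 1) *
          ((max l 1 : ℕ) : ℝ) ^ (α/2 - 1)) ∧
      ∃ R : ℝ, 0 < R ∧ ∀ t : ℝ, 0 < t → t < R →
        Summable fun p : ℕ × ℕ => ‖a p.1 p.2‖ * t ^ (α * (p.1:ℝ) - (p.2:ℝ)) := by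
  obtain ⟨C, r, hC, hr, hbound⟩ := ha.exists_norm_le_geometric hα hα2
  have hs : -1 ≤ α / 2 - 1 := by linarith
  refine ⟨C, 2, 2 * r, hC, two_pos, by positivity, fun l k hk => ?_,
    exists_summable_norm_mul_rpow hα hr hbound fun k l hkl =>
      ha.2.2.2.2.1 k l (by have := le_kval_add_two l; omega)⟩
  have hk' : 1 ≤ (2 : ℝ) ^ k * ((k - kval l + 1 : ℕ) : ℝ) ^ (α / 2 - 1) :=
    one_le_two_pow_mul_rpow (by omega)
      ((show k - kval l + 1 ≤ k by have := one_le_kval l; omega).trans Nat.lt_two_pow_self.le) hs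
  have hl' : 1 ≤ (2 : ℝ) ^ l * ((max l 1 : ℕ) : ℝ) ^ (α / 2 - 1) :=
    one_le_two_pow_mul_rpow (le_max_right _ _)
      (max_le Nat.lt_two_pow_self.le Nat.one_le_two_pow) hs
  calc ‖a k l‖ ≤ C * r ^ k := hbound k l
    _ ≤ C * r ^ k * (((2 : ℝ) ^ k * ((k - kval l + 1 : ℕ) : ℝ) ^ (α / 2 - 1)) *
          ((2 : ℝ) ^ l * ((max l 1 : ℕ) : ℝ) ^ (α / 2 - 1))) :=
        le_mul_of_one_le_right (by positivity) (one_le_mul_of_one_le_of_one_le hk' hl')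
    _ = _ := by rw [mul_pow]; ring
end
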